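/- Let Φ be a quantum channel on I = (a × b) ⊕ k with Kraus family {E_c}_{c∈C}, and let U ∈ Matrix b b ℂ be unitary. Then B is U-invariant under Φ if and only if the following two conditions hold: (i) there exist scalars λ_{c,x,y} ∈ ℂ such that P_{xx} · (Ũ† E_c) · P_{yy} = λ_{c,x,y} • P_{xy} for all c ∈ C and all x, y ∈ a; and (ii) (Ũ† E_c) · P = P · (Ũ† E_c) · P for all c ∈ C. -/

import Mathlib

/-!
Conjugating by `Ũ` turns `U`-invariance of `Φ` into the statement that the map with Kraus
operators `F c = Ũᴴ * E c` leaves the `B` factor untouched (`IsNoiselessSubsystem`), and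
conditions (i), (ii) say exactly that, in the block decomposition `(a × b) ⊕ k`, every `F c` has
the shape `[[Λ c ⊗ 1, *], [0, *]]`. Such operators send `emb σA σB` to
`emb (∑ c, Λ c σA (Λ c)ᴴ) σB`.

Conversely, feed in the pure state `v vᴴ` with `v = e_x ⊗ ψ`. The output
`∑ c, (F c v) (F c v)ᴴ = emb τA (ψ ψᴴ)` kills every vector `w` supported on `k`, and every `w`
whose `A`-slices are all orthogonal to `ψ`; a sum of positive rank-one terms kills `w` only if
each `F c v` is orthogonal to `w`. The first kind of `w` shows that the lower-left block of `F c`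
vanishes. The second shows that each `b × b` block `G` of `F c` satisfies `⟪G ψ, ξ⟫ = 0` whenever
`⟪ψ, ξ⟫ = 0`, and a matrix that preserves orthogonality in this way is a multiple of `1`.
-/

open Matrix Kronecker BigOperators

section

variable {a b k : Type*} [Fintype a] [Fintype b] [Fintype k]
  [DecidableEq a] [DecidableEq b] [DecidableEq k]

/-- The embedding of `σA ⊗ σB` into the `(a × b) ⊕ k`-indexed matrices:
the entry at `((x,i),(y,j))` (both in the `a × b` summand) is
`σA x y * σB i j`, and all other entries vanish. -/
noncomputable def emb (σA : Matrix a a ℂ) (σB : Matrix b b ℂ) :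
    Matrix ((a × b) ⊕ k) ((a × b) ⊕ k) ℂ :=
  Matrix.fromBlocks (σA ⊗ₖ σB) 0 0 0

/-- The projection onto the `a × b` summand. -/
noncomputable def Pm : Matrix ((a × b) ⊕ k) ((a × b) ⊕ k) ℂ :=
  Matrix.fromBlocks 1 0 0 0

/-- The matrix units `P_{xy} = emb (e_{xy}, 1^B)`. -/
noncomputable def Pu (x y : a) : Matrix ((a × b) ⊕ k) ((a × b) ⊕ k) ℂ :=
  emb (Matrix.single x y 1) 1

/-- `Ũ`: the `I × I` unitary acting as `1^A ⊗ U` on the `a × b` summand and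
as the identity on the `k` summand. -/
noncomputable def Ut (U : Matrix b b ℂ) :
    Matrix ((a × b) ⊕ k) ((a × b) ⊕ k) ℂ :=
  Matrix.fromBlocks ((1 : Matrix a a ℂ) ⊗ₖ U) 0 0 1

end

section KroneckerBlocks

variable {l m n p R : Type*}

theorem eq_kronecker_iff_forall_submatrix [Mul R] (N : Matrix (l × n) (m × p) R)
    (A : Matrix l m R) (B : Matrix n p R) :
    N = A ⊗ₖ B ↔ ∀ x y, N.submatrix (Prod.mk x) (Prod.mk y) = A x y • B := by
  refine ⟨fun h x y => by ext i j; simp [h], fun h => ?_⟩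
  ext ⟨x, i⟩ ⟨y, j⟩
  simpa using congrFun (congrFun (h x y) i) j

theorem single_kronecker_right_injective [MulZeroOneClass R] [DecidableEq l] [DecidableEq m]
    (x : l) (y : m) : Function.Injective (single x y (1 : R) ⊗ₖ · : Matrix n p R → _) := by
  intro A B h
  ext i j
  simpa using congrFun (congrFun h (x, i)) (y, j)

theorem single_kronecker_one_mul_mul_single_kronecker_one [Semiring R] [Fintype l] [Fintype n]
    [DecidableEq l] [DecidableEq n] (N : Matrix (l × n) (l × n) R) (x y : l) :
    (single x x 1 ⊗ₖ 1) * N * (single y y 1 ⊗ₖ 1) =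
      single x y 1 ⊗ₖ N.submatrix (Prod.mk x) (Prod.mk y) := by
  ext ⟨x', i⟩ ⟨y', j⟩
  simp [mul_apply, Fintype.sum_prod_type, single_apply, one_apply, ite_and]
  split_ifs <;> rfl

theorem exists_eq_smul_one_of_forall_star_dotProduct_eq_zero [Fintype n] [DecidableEq n]
    [CommRing R] [StarRing R] (B : Matrix n n R)
    (h : ∀ ψ ξ : n → R, star ψ ⬝ᵥ ξ = 0 → star (B *ᵥ ψ) ⬝ᵥ ξ = 0) : ∃ μ : R, B = μ • 1 := by
  have off_diag : ∀ i j, i ≠ j → B j i = 0 := fun i j hij => by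
    simpa [mulVec_single_one, hij] using h (Pi.single i 1) (Pi.single j 1) (by simp [hij])
  have diag : ∀ i j, B i i = B j j := fun i j => by
    rcases eq_or_ne i j with rfl | hij
    · rfl
    have := h (Pi.single i 1 + Pi.single j 1) (Pi.single i 1 - Pi.single j 1)
      (by simp [dotProduct_sub, hij, hij.symm])
    simpa [mulVec_add, mulVec_single_one, dotProduct_sub, off_diag _ _ hij,
      off_diag _ _ hij.symm, sub_eq_zero] using this
  rcases isEmpty_or_nonempty n with hn | ⟨⟨i₀⟩⟩
  · exact ⟨0, Subsingleton.elim _ _⟩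
  refine ⟨B i₀ i₀, ext fun i j => ?_⟩
  rcases eq_or_ne i j with rfl | hij
  · simp [diag i i₀]
  · simp [off_diag j i hij.symm, hij]

end KroneckerBlocks

section Kraus

variable {C n R : Type*} [Fintype C] [Fintype n]

def krausMap [Semiring R] [StarRing R] (F : C → Matrix n n R) (ρ : Matrix n n R) :
    Matrix n n R :=
  ∑ c, F c * ρ * (F c)ᴴ

theorem krausMap_mul_left [Semiring R] [StarRing R] (W : Matrix n n R) (F : C → Matrix n n R)
    (ρ : Matrix n n R) : krausMap (fun c => W * F c) ρ = W * krausMap F ρ * Wᴴ := by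
  simp [krausMap, Finset.mul_sum, Finset.sum_mul, conjTranspose_mul, Matrix.mul_assoc]

theorem krausMap_vecMulVec [Semiring R] [StarRing R] (F : C → Matrix n n R) (v : n → R) :
    krausMap F (vecMulVec v (star v)) = ∑ c, vecMulVec (F c *ᵥ v) (star (F c *ᵥ v)) := by
  simp [krausMap, mul_vecMulVec, vecMulVec_mul, star_mulVec]

theorem star_dotProduct_eq_zero_of_sum_vecMulVec_mulVec_eq_zero [CommRing R] [PartialOrder R]
    [StarRing R] [StarOrderedRing R] [NoZeroDivisors R] (u : C → n → R) (w : n → R)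
    (h : (∑ c, vecMulVec (u c) (star (u c))) *ᵥ w = 0) (c : C) : star (u c) ⬝ᵥ w = 0 := by
  set s : C → R := fun c => star (u c) ⬝ᵥ w
  have hs : star s ⬝ᵥ s = star w ⬝ᵥ (∑ c, vecMulVec (u c) (star (u c))) *ᵥ w := by
    simp only [sum_mulVec, vecMulVec_mulVec, dotProduct_sum, op_smul_eq_smul, dotProduct_smul]
    simp [s, dotProduct, mul_comm]
  rw [h, dotProduct_zero, dotProduct_star_self_eq_zero] at hs
  exact congrFun hs c

end Kraus

section Subsystem

variable {a b k C : Type*}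

theorem Pu_mul_mul_Pu [Fintype a] [Fintype b] [Fintype k] [DecidableEq a] [DecidableEq b]
    (M : Matrix ((a × b) ⊕ k) ((a × b) ⊕ k) ℂ) (x y : a) :
    Pu x x * M * Pu y y = emb (single x y 1) (M.toBlocks₁₁.submatrix (Prod.mk x) (Prod.mk y)) := by
  conv_lhs => rw [← fromBlocks_toBlocks M]
  simp [Pu, emb, fromBlocks_multiply, single_kronecker_one_mul_mul_single_kronecker_one]

theorem Pu_mul_mul_Pu_eq_smul_Pu_iff [Fintype a] [Fintype b] [Fintype k] [DecidableEq a]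
    [DecidableEq b] (M : Matrix ((a × b) ⊕ k) ((a × b) ⊕ k) ℂ) (x y : a) (l : ℂ) :
    Pu x x * M * Pu y y = l • Pu x y ↔ M.toBlocks₁₁.submatrix (Prod.mk x) (Prod.mk y) = l • 1 := by
  rw [Pu_mul_mul_Pu]
  simp [Pu, emb, fromBlocks_smul, ← kronecker_smul, fromBlocks_inj,
    (single_kronecker_right_injective x y).eq_iff]

theorem mul_Pm_eq_Pm_mul_mul_Pm_iff [Fintype a] [Fintype b] [Fintype k] [DecidableEq a]
    [DecidableEq b] (M : Matrix ((a × b) ⊕ k) ((a × b) ⊕ k) ℂ) :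
    M * Pm = Pm * M * Pm ↔ M.toBlocks₂₁ = 0 := by
  conv_lhs => rw [← fromBlocks_toBlocks M]
  simp [Pm, fromBlocks_multiply, fromBlocks_inj]

theorem kraus_conditions_iff [Fintype a] [Fintype b] [Fintype k] [DecidableEq a] [DecidableEq b]
    (F : C → Matrix ((a × b) ⊕ k) ((a × b) ⊕ k) ℂ) :
    ((∃ lam : C → a → a → ℂ, ∀ c x y, Pu x x * F c * Pu y y = lam c x y • Pu x y) ∧
      ∀ c, F c * Pm = Pm * F c * Pm) ↔
    ∃ Λ : C → Matrix a a ℂ, ∀ c, (F c).toBlocks₁₁ = Λ c ⊗ₖ 1 ∧ (F c).toBlocks₂₁ = 0 := by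
  simp only [Pu_mul_mul_Pu_eq_smul_Pu_iff, mul_Pm_eq_Pm_mul_mul_Pm_iff,
    eq_kronecker_iff_forall_submatrix, forall_and, exists_and_right]
  rfl

theorem sum_emb [Fintype C] (A : C → Matrix a a ℂ) (σB : Matrix b b ℂ) :
    ∑ c, emb (k := k) (A c) σB = emb (∑ c, A c) σB := by
  ext (⟨x, i⟩ | t) (⟨y, j⟩ | s) <;> simp [emb, Matrix.sum_apply, Finset.sum_mul]

theorem mul_emb_mul_conjTranspose [Fintype a] [Fintype b] [Fintype k] [DecidableEq b]
    (M : Matrix ((a × b) ⊕ k) ((a × b) ⊕ k) ℂ) (A : Matrix a a ℂ)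
    (h₁₁ : M.toBlocks₁₁ = A ⊗ₖ 1) (h₂₁ : M.toBlocks₂₁ = 0) (σA : Matrix a a ℂ)
    (σB : Matrix b b ℂ) : M * emb σA σB * Mᴴ = emb (A * σA * Aᴴ) σB := by
  rw [← fromBlocks_toBlocks M, h₁₁, h₂₁]
  simp [emb, fromBlocks_multiply, fromBlocks_conjTranspose, conjTranspose_kronecker,
    ← mul_kronecker_mul]

theorem krausMap_emb_of_blocks [Fintype a] [Fintype b] [Fintype k] [DecidableEq b] [Fintype C]
    (F : C → Matrix ((a × b) ⊕ k) ((a × b) ⊕ k) ℂ) (Λ : C → Matrix a a ℂ)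
    (hF : ∀ c, (F c).toBlocks₁₁ = Λ c ⊗ₖ 1 ∧ (F c).toBlocks₂₁ = 0)
    (σA : Matrix a a ℂ) (σB : Matrix b b ℂ) :
    krausMap F (emb σA σB) = emb (krausMap Λ σA) σB := by
  simp only [krausMap, fun c => mul_emb_mul_conjTranspose (F c) (Λ c) (hF c).1 (hF c).2, sum_emb]

def embVec (u : a → ℂ) (ψ : b → ℂ) : (a × b) ⊕ k → ℂ :=
  Sum.elim (fun p => u p.1 * ψ p.2) 0

theorem star_embVec (u : a → ℂ) (ψ : b → ℂ) :
    star (embVec (k := k) u ψ) = embVec (star u) (star ψ) := by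
  ext (⟨x, i⟩ | t) <;> simp [embVec]

theorem emb_vecMulVec (u u' : a → ℂ) (ψ ψ' : b → ℂ) :
    emb (k := k) (vecMulVec u u') (vecMulVec ψ ψ') = vecMulVec (embVec u ψ) (embVec u' ψ') := by
  ext (⟨x, i⟩ | t) (⟨y, j⟩ | s) <;> simp [emb, embVec, vecMulVec_apply, mul_mul_mul_comm]

theorem emb_mulVec_embVec [Fintype a] [Fintype b] [Fintype k] (σA : Matrix a a ℂ)
    (σB : Matrix b b ℂ) (u : a → ℂ) (ξ : b → ℂ) :
    emb (k := k) σA σB *ᵥ embVec u ξ = embVec (σA *ᵥ u) (σB *ᵥ ξ) := by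
  ext (⟨x, i⟩ | t)
  · simp [emb, embVec, mulVec, dotProduct, Fintype.sum_prod_type, Finset.mul_sum,
      Finset.sum_mul, mul_mul_mul_comm]
    exact Finset.sum_comm
  · simp [emb, embVec, mulVec, dotProduct]

theorem emb_mulVec_single_inr [Fintype a] [Fintype b] [Fintype k] [DecidableEq a]
    [DecidableEq b] [DecidableEq k] (σA : Matrix a a ℂ) (σB : Matrix b b ℂ) (t : k) :
    emb σA σB *ᵥ Pi.single (Sum.inr t) 1 = 0 := by
  ext (_ | _) <;> simp [emb]

theorem embVec_single_single [DecidableEq a] [DecidableEq b] [DecidableEq k] (x : a) (i : b) :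
    embVec (k := k) (Pi.single x 1) (Pi.single i 1) = Pi.single (Sum.inl (x, i)) 1 := by
  ext (⟨y, j⟩ | t) <;> simp [embVec, Pi.single_apply, ← ite_and, and_comm]

theorem star_mulVec_embVec_dotProduct_embVec [Fintype a] [Fintype b] [Fintype k]
    [DecidableEq a] (M : Matrix ((a × b) ⊕ k) ((a × b) ⊕ k) ℂ) (x y : a) (ψ ξ : b → ℂ) :
    star (M *ᵥ embVec (Pi.single x 1) ψ) ⬝ᵥ embVec (Pi.single y 1) ξ =
      star (M.toBlocks₁₁.submatrix (Prod.mk y) (Prod.mk x) *ᵥ ψ) ⬝ᵥ ξ := by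
  simp [embVec, dotProduct, mulVec, Fintype.sum_prod_type, Pi.single_apply, toBlocks₁₁]

end Subsystem

section Noiseless

variable {a b k C : Type*} [Fintype a] [Fintype b] [Fintype k] [Fintype C]

def IsNoiselessSubsystem (F : C → Matrix ((a × b) ⊕ k) ((a × b) ⊕ k) ℂ) : Prop :=
  ∀ (σA : Matrix a a ℂ) (σB : Matrix b b ℂ), ∃ τA, krausMap F (emb σA σB) = emb τA σB

namespace IsNoiselessSubsystem

variable {F : C → Matrix ((a × b) ⊕ k) ((a × b) ⊕ k) ℂ}

open scoped ComplexOrder in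
theorem star_mulVec_embVec_dotProduct_eq_zero [DecidableEq a] (hF : IsNoiselessSubsystem F)
    (x : a) (ψ : b → ℂ) (w : (a × b) ⊕ k → ℂ)
    (hw : ∀ τA, emb τA (vecMulVec ψ (star ψ)) *ᵥ w = 0) (c : C) :
    star (F c *ᵥ embVec (Pi.single x 1) ψ) ⬝ᵥ w = 0 := by
  obtain ⟨τA, hτA⟩ :=
    hF (vecMulVec (Pi.single x 1) (star (Pi.single x 1))) (vecMulVec ψ (star ψ))
  rw [emb_vecMulVec, ← star_embVec, krausMap_vecMulVec] at hτA
  exact star_dotProduct_eq_zero_of_sum_vecMulVec_mulVec_eq_zero _ w (hτA ▸ hw τA) c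

theorem toBlocks₂₁_eq_zero [DecidableEq a] [DecidableEq b] [DecidableEq k]
    (hF : IsNoiselessSubsystem F) (c : C) : (F c).toBlocks₂₁ = 0 := by
  ext t ⟨x, i⟩
  have := hF.star_mulVec_embVec_dotProduct_eq_zero x (Pi.single i 1) (Pi.single (Sum.inr t) 1)
    (fun τA => emb_mulVec_single_inr _ _ t) c
  simpa [embVec_single_single, mulVec_single_one, toBlocks₂₁] using this

theorem exists_submatrix_toBlocks₁₁_eq_smul_one [DecidableEq a] [DecidableEq b]
    (hF : IsNoiselessSubsystem F) (c : C) (x y : a) :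
    ∃ μ : ℂ, (F c).toBlocks₁₁.submatrix (Prod.mk x) (Prod.mk y) = μ • 1 := by
  refine exists_eq_smul_one_of_forall_star_dotProduct_eq_zero _ fun ψ ξ hψξ => ?_
  rw [← star_mulVec_embVec_dotProduct_embVec]
  refine hF.star_mulVec_embVec_dotProduct_eq_zero y ψ _ (fun τA => ?_) c
  rw [emb_mulVec_embVec, vecMulVec_mulVec, hψξ]
  ext (_ | _) <;> simp [embVec]

theorem exists_blocks [DecidableEq a] [DecidableEq b] [DecidableEq k]
    (hF : IsNoiselessSubsystem F) :
    ∃ Λ : C → Matrix a a ℂ, ∀ c, (F c).toBlocks₁₁ = Λ c ⊗ₖ 1 ∧ (F c).toBlocks₂₁ = 0 := by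
  choose μ hμ using hF.exists_submatrix_toBlocks₁₁_eq_smul_one
  exact ⟨fun c => of (μ c), fun c =>
    ⟨(eq_kronecker_iff_forall_submatrix _ _ _).2 (hμ c), hF.toBlocks₂₁_eq_zero c⟩⟩

end IsNoiselessSubsystem

theorem isNoiselessSubsystem_iff_exists_blocks [DecidableEq a] [DecidableEq b] [DecidableEq k]
    (F : C → Matrix ((a × b) ⊕ k) ((a × b) ⊕ k) ℂ) :
    IsNoiselessSubsystem F ↔
      ∃ Λ : C → Matrix a a ℂ, ∀ c, (F c).toBlocks₁₁ = Λ c ⊗ₖ 1 ∧ (F c).toBlocks₂₁ = 0 :=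
  ⟨IsNoiselessSubsystem.exists_blocks, fun ⟨Λ, hΛ⟩ σA σB =>
    ⟨krausMap Λ σA, krausMap_emb_of_blocks F Λ hΛ σA σB⟩⟩

end Noiseless

theorem eq_mul_mul_star_iff {M : Type*} [Monoid M] [StarMul M] {W : M} (hW : W ∈ unitary M)
    (X Y : M) : X = W * Y * star W ↔ star W * X * W = Y := by
  have h₁ := Unitary.star_mul_self_of_mem hW
  have h₂ := Unitary.mul_star_self_of_mem hW
  constructor
  · rintro rfl
    rw [← mul_assoc, ← mul_assoc, h₁, one_mul, mul_assoc, h₁, mul_one]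
  · rintro rfl
    rw [← mul_assoc W, ← mul_assoc W, h₂, one_mul, mul_assoc, h₂, mul_one]

section Conjugation

variable {a b k : Type*} [Fintype a] [Fintype b] [Fintype k] [DecidableEq a] [DecidableEq k]

theorem Ut_mul_emb_mul_conjTranspose (U : Matrix b b ℂ) (σA : Matrix a a ℂ)
    (σB : Matrix b b ℂ) : Ut U * emb σA σB * (Ut U)ᴴ = emb (k := k) σA (U * σB * Uᴴ) := by
  simp [Ut, emb, fromBlocks_multiply, fromBlocks_conjTranspose, conjTranspose_kronecker,
    ← mul_kronecker_mul]

theorem Ut_mem_unitaryGroup [DecidableEq b] {U : Matrix b b ℂ} (hU : U ∈ unitaryGroup b ℂ) :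
    Ut (a := a) (k := k) U ∈ unitaryGroup ((a × b) ⊕ k) ℂ := by
  rw [mem_unitaryGroup_iff, star_eq_conjTranspose] at hU ⊢
  simp [Ut, fromBlocks_multiply, fromBlocks_conjTranspose, conjTranspose_kronecker,
    ← mul_kronecker_mul, hU]

end Conjugation

section

variable {a b k : Type*} [Fintype a] [Fintype b] [Fintype k]
  [DecidableEq a] [DecidableEq b] [DecidableEq k]

theorem U_invariant_iff_kraus_conditions_general
    {C : Type*} [Fintype C]
    (Φ : Matrix ((a × b) ⊕ k) ((a × b) ⊕ k) ℂ →
         Matrix ((a × b) ⊕ k) ((a × b) ⊕ k) ℂ)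
    (E : C → Matrix ((a × b) ⊕ k) ((a × b) ⊕ k) ℂ)
    (hΦ : ∀ ρ, Φ ρ = ∑ c, E c * ρ * (E c)ᴴ)
    (U : Matrix b b ℂ) (hU : U ∈ Matrix.unitaryGroup b ℂ) :
    (∀ (σA : Matrix a a ℂ) (σB : Matrix b b ℂ),
        ∃ τA : Matrix a a ℂ, Φ (emb σA σB) = emb τA (U * σB * Uᴴ)) ↔
    ((∃ lam : C → a → a → ℂ, ∀ (c : C) (x y : a),
        Pu x x * ((Ut U)ᴴ * E c) * Pu y y = lam c x y • Pu x y) ∧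
      (∀ c : C, ((Ut U)ᴴ * E c) * Pm = Pm * ((Ut U)ᴴ * E c) * Pm)) := by
  have hUt := Ut_mem_unitaryGroup (a := a) (k := k) hU
  have invariant_iff : ∀ σA σB τA, Φ (emb σA σB) = emb τA (U * σB * Uᴴ) ↔
      krausMap (fun c => (Ut U)ᴴ * E c) (emb σA σB) = emb τA σB := fun σA σB τA => by
    rw [hΦ, ← Ut_mul_emb_mul_conjTranspose, krausMap_mul_left, conjTranspose_conjTranspose,
      ← star_eq_conjTranspose]
    exact eq_mul_mul_star_iff hUt _ _
  simp only [invariant_iff]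
  exact (isNoiselessSubsystem_iff_exists_blocks _).trans (kraus_conditions_iff _).symm

/-- For a quantum channel `Φ` on `I = (a × b) ⊕ k` with Kraus
family `{E c}` and a unitary `U` on `b`, subsystem `B` is `U`-invariant under
`Φ` iff (i) `P_{xx} (Ũᴴ E_c) P_{yy} = λ_{c,x,y} • P_{xy}` for some scalars
`λ_{c,x,y}` and (ii) `(Ũᴴ E_c) P = P (Ũᴴ E_c) P` for all `c`. -/
theorem U_invariant_iff_kraus_conditions
    {C : Type*} [Fintype C] [Nonempty a] [Nonempty b] [Nonempty k]
    (Φ : Matrix ((a × b) ⊕ k) ((a × b) ⊕ k) ℂ →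
         Matrix ((a × b) ⊕ k) ((a × b) ⊕ k) ℂ)
    (E : C → Matrix ((a × b) ⊕ k) ((a × b) ⊕ k) ℂ)
    (hΦ : ∀ ρ, Φ ρ = ∑ c, E c * ρ * (E c)ᴴ)
    (hE : ∑ c, (E c)ᴴ * E c = 1)
    (U : Matrix b b ℂ) (hU : U ∈ Matrix.unitaryGroup b ℂ) :
    (∀ (σA : Matrix a a ℂ) (σB : Matrix b b ℂ),
        ∃ τA : Matrix a a ℂ, Φ (emb σA σB) = emb τA (U * σB * Uᴴ)) ↔
    ((∃ lam : C → a → a → ℂ, ∀ (c : C) (x y : a),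
        Pu x x * ((Ut U)ᴴ * E c) * Pu y y = lam c x y • Pu x y) ∧
      (∀ c : C, ((Ut U)ᴴ * E c) * Pm = Pm * ((Ut U)ᴴ * E c) * Pm)) :=
  U_invariant_iff_kraus_conditions_general Φ E hΦ U hU

end
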